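/- The function f is continuously differentiable on [0,∞) with f(0) = 0 and derivative f'(r) = φ(r) g(r); f' is nonincreasing (hence f is concave), and φ(R₀)/2 ≤ f'(r) ≤ 1 for all r ≥ 0, so in particular f is strictly increasing. -/

import Mathlib

/-!
`f` is the primitive of `φ g`, which is continuous on `[0, ∞)`, so differentiability, concavity
and strict monotonicity of `f` reduce to `φ g` being antitone and positive. Both factors are
antitone: `φ` because `κ₋ ≥ 0`, and `g` because `Φ / φ ≥ 0`. Since `κ₋` vanishes beyond `R₀`,
`φ` is constant there, whence `φ(R₀) ≤ φ ≤ φ(0) = 1`; the normalisation `c` makes `1/2 ≤ g ≤ 1`.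
-/

open MeasureTheory Real Set
open scoped RealInnerProductSpace

/-- `φ(r) = exp(−(1/4) ∫₀^r s κ₋(s) ds)` where `κ₋ = max(0, −κ)`. -/
noncomputable def phiF (κ : ℝ → ℝ) (r : ℝ) : ℝ :=
  Real.exp (-(1 / 4) * ∫ s in (0:ℝ)..r, s * max 0 (-κ s))

/-- `Φ(r) = ∫₀^r φ(s) ds`. -/
noncomputable def PhiF (κ : ℝ → ℝ) (r : ℝ) : ℝ := ∫ s in (0:ℝ)..r, phiF κ s

/-- `R₀ = inf {s ≥ 0 : κ(r) ≥ 0 for all r ≥ s}`. -/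
noncomputable def R0 (κ : ℝ → ℝ) : ℝ := sInf {s : ℝ | 0 ≤ s ∧ ∀ r, s ≤ r → 0 ≤ κ r}

/-- `R₁ = inf {s ≥ R₀ : s(s − R₀)κ(r) ≥ 8 for all r ≥ s}`. -/
noncomputable def R1 (κ : ℝ → ℝ) : ℝ :=
  sInf {s : ℝ | R0 κ ≤ s ∧ ∀ r, s ≤ r → 8 ≤ s * (s - R0 κ) * κ r}

/-- `c = (∫₀^{R₁} Φ(s) φ(s)⁻¹ ds)⁻¹`. -/
noncomputable def cF (κ : ℝ → ℝ) : ℝ := (∫ s in (0:ℝ)..R1 κ, PhiF κ s / phiF κ s)⁻¹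

/-- `g(r) = 1 − (c/2) ∫₀^{min(r,R₁)} Φ(s) φ(s)⁻¹ ds`. -/
noncomputable def gF (κ : ℝ → ℝ) (r : ℝ) : ℝ :=
  1 - cF κ / 2 * ∫ s in (0:ℝ)..min r (R1 κ), PhiF κ s / phiF κ s

/-- `f(r) = ∫₀^r φ(s) g(s) ds`. -/
noncomputable def fF (κ : ℝ → ℝ) (r : ℝ) : ℝ := ∫ s in (0:ℝ)..r, phiF κ s * gF κ s

section Primitive

variable {F : ℝ → ℝ} {a : ℝ}

theorem hasDerivWithinAt_integral_Ici (hF : ContinuousOn F (Ici a)) {r : ℝ} (hr : a ≤ r) :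
    HasDerivWithinAt (fun x => ∫ s in a..x, F s) (F r) (Ici a) r := by
  have hint : IntervalIntegrable F volume a r :=
    (hF.mono (by rw [uIcc_of_le hr]; exact Icc_subset_Ici_self)).intervalIntegrable
  rcases hr.eq_or_lt with rfl | hr
  · exact intervalIntegral.integral_hasDerivWithinAt_right hint
      ((hF.mono Ioi_subset_Ici_self).stronglyMeasurableAtFilter_nhdsWithin measurableSet_Ioi a)
      ((hF.continuousWithinAt self_mem_Ici).mono Ioi_subset_Ici_self)
  · exact (intervalIntegral.integral_hasDerivAt_right hint
      (ContinuousAt.stronglyMeasurableAtFilter isOpen_Ioi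
        (fun x hx => hF.continuousAt (Ici_mem_nhds hx)) r hr)
      (hF.continuousAt (Ici_mem_nhds hr))).hasDerivWithinAt

theorem continuousOn_integral_Ici (hF : ContinuousOn F (Ici a)) :
    ContinuousOn (fun x => ∫ s in a..x, F s) (Ici a) :=
  fun _ hr => (hasDerivWithinAt_integral_Ici hF hr).continuousWithinAt

theorem hasDerivWithinAt_integral_interior_Ici (hF : ContinuousOn F (Ici a)) :
    ∀ x ∈ interior (Ici a),
      HasDerivWithinAt (fun x => ∫ s in a..x, F s) (F x) (interior (Ici a)) x :=
  fun _ hx => (hasDerivWithinAt_integral_Ici hF (interior_subset hx)).mono interior_subset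

theorem monotoneOn_integral_Ici (hF : ContinuousOn F (Ici a)) (hF₀ : ∀ x ∈ Ici a, 0 ≤ F x) :
    MonotoneOn (fun x => ∫ s in a..x, F s) (Ici a) :=
  monotoneOn_of_hasDerivWithinAt_nonneg (convex_Ici a) (continuousOn_integral_Ici hF)
    (hasDerivWithinAt_integral_interior_Ici hF) fun x hx => hF₀ x (interior_subset hx)

theorem strictMonoOn_integral_Ici (hF : ContinuousOn F (Ici a)) (hF₀ : ∀ x ∈ Ici a, 0 < F x) :
    StrictMonoOn (fun x => ∫ s in a..x, F s) (Ici a) :=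
  strictMonoOn_of_hasDerivWithinAt_pos (convex_Ici a) (continuousOn_integral_Ici hF)
    (hasDerivWithinAt_integral_interior_Ici hF) fun x hx => hF₀ x (interior_subset hx)

theorem concaveOn_integral_Ici (hF : ContinuousOn F (Ici a)) (h_anti : AntitoneOn F (Ici a)) :
    ConcaveOn ℝ (Ici a) (fun x => ∫ s in a..x, F s) := by
  have hderiv := hasDerivWithinAt_integral_interior_Ici hF
  refine AntitoneOn.concaveOn_of_deriv (convex_Ici a) (continuousOn_integral_Ici hF)
    (fun x hx => (hderiv x hx).differentiableWithinAt) fun x hx y hy hxy => ?_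
  rw [deriv_eqOn isOpen_interior hderiv hx, deriv_eqOn isOpen_interior hderiv hy]
  exact h_anti (interior_subset hx) (interior_subset hy) hxy

theorem integral_eq_of_forall_Ioc_eq_zero {b c : ℝ} (hab : IntervalIntegrable F volume a b)
    (hbc : IntervalIntegrable F volume b c) (hc : b ≤ c) (hF : ∀ x ∈ Ioc b c, F x = 0) :
    ∫ s in a..c, F s = ∫ s in a..b, F s := by
  have hzero : ∫ s in b..c, F s = 0 :=
    intervalIntegral.integral_zero_ae (.of_forall fun x hx => hF x (by rwa [uIoc_of_le hc] at hx))
  rw [← intervalIntegral.integral_add_adjacent_intervals hab hbc, hzero, add_zero]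

end Primitive

section Profile

variable {κ : ℝ → ℝ}

theorem R0_nonneg : 0 ≤ R0 κ := Real.sInf_nonneg fun _ hs => hs.1

theorem R1_nonneg : 0 ≤ R1 κ := Real.sInf_nonneg fun _ hs => R0_nonneg.trans hs.1

theorem nonneg_of_R0_lt (hκ_ev : ∃ R, ∀ r ≥ R, 0 ≤ κ r) {r : ℝ} (hr : R0 κ < r) :
    0 ≤ κ r := by
  obtain ⟨R, hR⟩ := hκ_ev
  have hne : {s : ℝ | 0 ≤ s ∧ ∀ r, s ≤ r → 0 ≤ κ r}.Nonempty :=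
    ⟨max R 0, le_max_right _ _, fun r hr => hR r ((le_max_left _ _).trans hr)⟩
  obtain ⟨s, hs, hsr⟩ := exists_lt_of_csInf_lt hne hr
  exact hs.2 r hsr.le

theorem continuousOn_mul_negPart (hκ : ContinuousOn κ (Ici 0)) :
    ContinuousOn (fun s => s * max 0 (-κ s)) (Ici 0) :=
  continuousOn_id.mul (continuousOn_const.sup hκ.neg)

theorem phiF_pos (r : ℝ) : 0 < phiF κ r := exp_pos _

theorem phiF_zero : phiF κ 0 = 1 := by simp [phiF]

theorem continuousOn_phiF (hκ : ContinuousOn κ (Ici 0)) : ContinuousOn (phiF κ) (Ici 0) :=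
  continuous_exp.comp_continuousOn
    (continuousOn_const.mul (continuousOn_integral_Ici (continuousOn_mul_negPart hκ)))

theorem antitoneOn_phiF (hκ : ContinuousOn κ (Ici 0)) : AntitoneOn (phiF κ) (Ici 0) :=
  fun x hx y hy hxy => exp_le_exp.2 <| mul_le_mul_of_nonpos_left
    (monotoneOn_integral_Ici (continuousOn_mul_negPart hκ)
      (fun s hs => mul_nonneg hs (le_max_left _ _)) hx hy hxy) (by norm_num)

theorem phiF_le_one (hκ : ContinuousOn κ (Ici 0)) {r : ℝ} (hr : 0 ≤ r) : phiF κ r ≤ 1 :=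
  phiF_zero (κ := κ) ▸ antitoneOn_phiF hκ self_mem_Ici hr hr

theorem phiF_eq_phiF_R0 (hκ : ContinuousOn κ (Ici 0)) (hκ_ev : ∃ R, ∀ r ≥ R, 0 ≤ κ r) {r : ℝ}
    (hr : R0 κ ≤ r) : phiF κ r = phiF κ (R0 κ) := by
  have hcont := continuousOn_mul_negPart hκ
  rw [phiF, phiF, integral_eq_of_forall_Ioc_eq_zero
    ((hcont.mono fun x hx => hx.1).intervalIntegrable_of_Icc R0_nonneg)
    ((hcont.mono fun x hx => R0_nonneg.trans hx.1).intervalIntegrable_of_Icc hr) hr]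
  intro s hs
  rw [max_eq_left (neg_nonpos.2 (nonneg_of_R0_lt hκ_ev hs.1)), mul_zero]

theorem phiF_R0_le (hκ : ContinuousOn κ (Ici 0)) (hκ_ev : ∃ R, ∀ r ≥ R, 0 ≤ κ r) {r : ℝ}
    (hr : 0 ≤ r) : phiF κ (R0 κ) ≤ phiF κ r := by
  rcases le_total r (R0 κ) with h | h
  · exact antitoneOn_phiF hκ hr R0_nonneg h
  · exact (phiF_eq_phiF_R0 hκ hκ_ev h).ge

theorem PhiF_nonneg {r : ℝ} (hr : 0 ≤ r) : 0 ≤ PhiF κ r :=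
  intervalIntegral.integral_nonneg hr fun x _ => (phiF_pos x).le

theorem continuousOn_PhiF_div_phiF (hκ : ContinuousOn κ (Ici 0)) :
    ContinuousOn (fun s => PhiF κ s / phiF κ s) (Ici 0) :=
  (continuousOn_integral_Ici (continuousOn_phiF hκ)).div (continuousOn_phiF hκ)
    fun x _ => (phiF_pos x).ne'

theorem monotoneOn_integral_PhiF_div_phiF (hκ : ContinuousOn κ (Ici 0)) :
    MonotoneOn (fun x => ∫ s in (0:ℝ)..x, PhiF κ s / phiF κ s) (Ici 0) :=
  monotoneOn_integral_Ici (continuousOn_PhiF_div_phiF hκ)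
    fun s hs => div_nonneg (PhiF_nonneg hs) (phiF_pos s).le

theorem cF_nonneg (hκ : ContinuousOn κ (Ici 0)) : 0 ≤ cF κ :=
  inv_nonneg.2 <| by
    simpa using monotoneOn_integral_PhiF_div_phiF hκ self_mem_Ici R1_nonneg R1_nonneg

/-- `c` normalises the integral so that `g` drops from `1` at `r = 0` to `1/2` at `r = R₁`. -/
theorem cF_mul_integral_mem_Icc (hκ : ContinuousOn κ (Ici 0)) {r : ℝ} (hr : 0 ≤ r) :
    cF κ * ∫ s in (0:ℝ)..min r (R1 κ), PhiF κ s / phiF κ s ∈ Icc 0 1 := by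
  have hmono := monotoneOn_integral_PhiF_div_phiF hκ
  have hmin : (0 : ℝ) ≤ min r (R1 κ) := le_min hr R1_nonneg
  have h0 := hmono self_mem_Ici hmin hmin
  have h1 := hmono hmin R1_nonneg (min_le_right r (R1 κ))
  simp only [intervalIntegral.integral_same] at h0
  exact ⟨mul_nonneg (cF_nonneg hκ) h0, inv_mul_le_one_of_le₀ h1 (h0.trans h1)⟩

theorem one_half_le_gF (hκ : ContinuousOn κ (Ici 0)) {r : ℝ} (hr : 0 ≤ r) : 1 / 2 ≤ gF κ r := by
  have := (cF_mul_integral_mem_Icc hκ hr).2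
  rw [gF]
  linarith

theorem gF_le_one (hκ : ContinuousOn κ (Ici 0)) {r : ℝ} (hr : 0 ≤ r) : gF κ r ≤ 1 := by
  have := (cF_mul_integral_mem_Icc hκ hr).1
  rw [gF]
  linarith

theorem antitoneOn_gF (hκ : ContinuousOn κ (Ici 0)) : AntitoneOn (gF κ) (Ici 0) := by
  intro x hx y hy hxy
  have h := monotoneOn_integral_PhiF_div_phiF hκ (le_min hx R1_nonneg) (le_min hy R1_nonneg)
    (min_le_min_right (R1 κ) hxy)
  simp only [gF, sub_le_sub_iff_left]
  exact mul_le_mul_of_nonneg_left h (div_nonneg (cF_nonneg hκ) zero_le_two)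

theorem continuousOn_gF (hκ : ContinuousOn κ (Ici 0)) : ContinuousOn (gF κ) (Ici 0) :=
  continuousOn_const.sub <| continuousOn_const.mul <|
    (continuousOn_integral_Ici (continuousOn_PhiF_div_phiF hκ)).comp
      (continuous_id.min continuous_const).continuousOn fun _ hr => le_min hr R1_nonneg

theorem continuousOn_phiF_mul_gF (hκ : ContinuousOn κ (Ici 0)) :
    ContinuousOn (fun r => phiF κ r * gF κ r) (Ici 0) :=
  (continuousOn_phiF hκ).mul (continuousOn_gF hκ)

theorem antitoneOn_phiF_mul_gF (hκ : ContinuousOn κ (Ici 0)) :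
    AntitoneOn (fun r => phiF κ r * gF κ r) (Ici 0) := fun _ hx _ hy hxy =>
  mul_le_mul (antitoneOn_phiF hκ hx hy hxy) (antitoneOn_gF hκ hx hy hxy)
    ((one_half_le_gF hκ hy).trans' (by norm_num)) (phiF_pos _).le

theorem phiF_R0_div_two_le (hκ : ContinuousOn κ (Ici 0)) (hκ_ev : ∃ R, ∀ r ≥ R, 0 ≤ κ r)
    {r : ℝ} (hr : 0 ≤ r) : phiF κ (R0 κ) / 2 ≤ phiF κ r * gF κ r := by
  rw [div_eq_mul_one_div]
  exact mul_le_mul (phiF_R0_le hκ hκ_ev hr) (one_half_le_gF hκ hr) (by norm_num) (phiF_pos r).le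

theorem phiF_mul_gF_le_one (hκ : ContinuousOn κ (Ici 0)) {r : ℝ} (hr : 0 ≤ r) :
    phiF κ r * gF κ r ≤ 1 :=
  mul_le_one₀ (phiF_le_one hκ hr) ((one_half_le_gF hκ hr).trans' (by norm_num)) (gF_le_one hκ hr)

end Profile

theorem stmt5_general (κ : ℝ → ℝ) (hκcont : ContinuousOn κ (Set.Ici 0))
    (hκliminf : ∃ ε > (0 : ℝ), ∃ R : ℝ, ∀ r ≥ R, ε ≤ κ r) :
    fF κ 0 = 0 ∧
    (∀ r : ℝ, 0 ≤ r → HasDerivWithinAt (fF κ) (phiF κ r * gF κ r) (Set.Ici 0) r) ∧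
    ContinuousOn (fun r => phiF κ r * gF κ r) (Set.Ici 0) ∧
    AntitoneOn (fun r => phiF κ r * gF κ r) (Set.Ici 0) ∧
    ConcaveOn ℝ (Set.Ici 0) (fF κ) ∧
    (∀ r : ℝ, 0 ≤ r → phiF κ (R0 κ) / 2 ≤ phiF κ r * gF κ r ∧ phiF κ r * gF κ r ≤ 1) ∧
    StrictMonoOn (fF κ) (Set.Ici 0) := by
  obtain ⟨ε, hε, R, hR⟩ := hκliminf
  have hκ_ev : ∃ R, ∀ r ≥ R, 0 ≤ κ r := ⟨R, fun r hr => hε.le.trans (hR r hr)⟩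
  have hcont := continuousOn_phiF_mul_gF hκcont
  have hpos : ∀ r ∈ Ici (0 : ℝ), 0 < phiF κ r * gF κ r := fun r hr =>
    (half_pos (phiF_pos _)).trans_le (phiF_R0_div_two_le hκcont hκ_ev hr)
  exact ⟨intervalIntegral.integral_same, fun r hr => hasDerivWithinAt_integral_Ici hcont hr,
    hcont, antitoneOn_phiF_mul_gF hκcont,
    concaveOn_integral_Ici hcont (antitoneOn_phiF_mul_gF hκcont),
    fun r hr => ⟨phiF_R0_div_two_le hκcont hκ_ev hr, phiF_mul_gF_le_one hκcont hr⟩,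
    strictMonoOn_integral_Ici hcont hpos⟩

/-- `f` is continuously differentiable on `[0,∞)` with `f(0) = 0` and derivative
`f'(r) = φ(r) g(r)`; `f'` is nonincreasing (hence `f` is concave), and
`φ(R₀)/2 ≤ f'(r) ≤ 1` for all `r ≥ 0`, so in particular `f` is strictly increasing. -/
theorem stmt5 (κ : ℝ → ℝ) (hκcont : ContinuousOn κ (Set.Ici 0))
    (hκliminf : ∃ ε > (0 : ℝ), ∃ R : ℝ, ∀ r ≥ R, ε ≤ κ r) (hR1 : 0 < R1 κ) :
    fF κ 0 = 0 ∧
    (∀ r : ℝ, 0 ≤ r → HasDerivWithinAt (fF κ) (phiF κ r * gF κ r) (Set.Ici 0) r) ∧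
    ContinuousOn (fun r => phiF κ r * gF κ r) (Set.Ici 0) ∧
    AntitoneOn (fun r => phiF κ r * gF κ r) (Set.Ici 0) ∧
    ConcaveOn ℝ (Set.Ici 0) (fF κ) ∧
    (∀ r : ℝ, 0 ≤ r → phiF κ (R0 κ) / 2 ≤ phiF κ r * gF κ r ∧ phiF κ r * gF κ r ≤ 1) ∧
    StrictMonoOn (fF κ) (Set.Ici 0) :=
  stmt5_general κ hκcont hκliminf
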